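/- Let f̂ be the multiplicative-type bound f̂(q) = (1/q)·∏_{p | q} (3/p). Then for every Y ≥ 2 there exist constants c, C > 0 (independent of Y) such that Σ_{q ≥ Y} f̂(q) ≤ C·e^{c√(log Y)}/Y. -/

import Mathlib

/-!
Rankin's trick: for `q ≥ Y` and `0 < β ≤ 1` we have `f̂(q) ≤ Y^(β-1) · q^(-β) ∏_{p ∣ q} 3/p`,
and the right-hand factor is multiplicative in `q`, so its sum over all `q` is bounded by the Euler
product `∏_p (1 + 3/(p (p^β - 1))) ≤ exp (3/β · ∑_p 1/(p log p))`, using `p^β - 1 ≥ β log p`.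
Chebyshev's bound `θ(x) ≤ x log 4` on dyadic blocks `[2^k, 2^(k+1))` gives `∑_p 1/(p log p) ≤ 12`.
Finally `β = 1/(2√(log Y))` balances `Y^β = exp (√(log Y)/2)` against
`exp (36/β) = exp (72 √(log Y))`.
-/

/-- The bound `f̂(q) = (1/q)·∏_{p ∣ q} (3/p)`. -/
noncomputable def fhat (q : ℕ) : ℝ := (1 / (q : ℝ)) * ∏ p ∈ q.primeFactors, (3 : ℝ) / p

open Finset Real

theorem sum_one_div_mul_log_le_of_log_eq {s : Finset ℕ} (hs : ∀ p ∈ s, p.Prime) {k : ℕ}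
    (hk : ∀ p ∈ s, Nat.log 2 p = k) :
    ∑ p ∈ s, 1 / (p * log p) ≤ 4 / (log 2 * k ^ 2) := by
  rcases s.eq_empty_or_nonempty with rfl | ⟨p₀, hp₀⟩
  · simp only [sum_empty]; positivity
  have hk1 : 1 ≤ k := hk p₀ hp₀ ▸ Nat.log_pos one_lt_two (hs p₀ hp₀).two_le
  have hlog2 : 0 < log 2 := log_pos one_lt_two
  have pointwise : ∀ p ∈ s, 1 / (p * log p) ≤ log p / (2 ^ k * (k * log 2) ^ 2) := by
    intro p hp
    have hp1 : (1 : ℝ) < p := by exact_mod_cast (hs p hp).one_lt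
    have hpow : (2 : ℝ) ^ k ≤ p := by
      exact_mod_cast hk p hp ▸ Nat.pow_log_le_self 2 (hs p hp).ne_zero
    have hlog : k * log 2 ≤ log p := by
      rw [← log_pow]; exact log_le_log (by positivity) hpow
    have hlogp : 0 < log p := log_pos hp1
    rw [div_le_div_iff₀ (by positivity) (by positivity), one_mul]
    calc (2 : ℝ) ^ k * (k * log 2) ^ 2 ≤ p * log p ^ 2 := by gcongr
      _ = log p * (p * log p) := by ring
  have chebyshev : ∑ p ∈ s, log p ≤ log 4 * 2 ^ (k + 1) := by
    have hsub : s ⊆ Nat.primesLE (2 ^ (k + 1)) := fun p hp =>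
      Nat.mem_primesLE.mpr ⟨(hk p hp ▸ Nat.lt_pow_succ_log_self one_lt_two p).le, hs p hp⟩
    calc ∑ p ∈ s, log p ≤ ∑ p ∈ Nat.primesLE (2 ^ (k + 1)), log p :=
          sum_le_sum_of_subset_of_nonneg hsub fun p _ _ => log_natCast_nonneg p
      _ = Chebyshev.theta (2 ^ (k + 1)) := by
          rw [← Chebyshev.theta_eq_sum_primesLE_log]; push_cast; rfl
      _ ≤ log 4 * 2 ^ (k + 1) := Chebyshev.theta_le_log4_mul_x (by positivity)
  have hlog4 : log 4 = 2 * log 2 := by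
    rw [show (4 : ℝ) = 2 ^ 2 by norm_num, log_pow]; norm_num
  calc ∑ p ∈ s, 1 / (p * log p) ≤ ∑ p ∈ s, log p / (2 ^ k * (k * log 2) ^ 2) :=
        sum_le_sum pointwise
    _ = (∑ p ∈ s, log p) / (2 ^ k * (k * log 2) ^ 2) := (sum_div ..).symm
    _ ≤ log 4 * 2 ^ (k + 1) / (2 ^ k * (k * log 2) ^ 2) := by gcongr
    _ = 4 / (log 2 * k ^ 2) := by
        have : (k : ℝ) ≠ 0 := by positivity
        rw [hlog4]; field_simp; ring

theorem sum_one_div_mul_log_le {s : Finset ℕ} (hs : ∀ p ∈ s, p.Prime) :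
    ∑ p ∈ s, 1 / (p * log p) ≤ 12 := by
  set M := s.sup (Nat.log 2) + 1
  have maps : ∀ p ∈ s, Nat.log 2 p ∈ Ioo 0 M := fun p hp =>
    mem_Ioo.mpr ⟨Nat.log_pos one_lt_two (hs p hp).two_le, Nat.lt_succ_of_le (le_sup hp)⟩
  have hlog2 : 0.6931471803 < log 2 := log_two_gt_d9
  rw [← sum_fiberwise_of_maps_to maps]
  calc ∑ k ∈ Ioo 0 M, ∑ p ∈ s with Nat.log 2 p = k, 1 / (p * log p)
      ≤ ∑ k ∈ Ioo 0 M, 4 / (log 2 * k ^ 2) := sum_le_sum fun k _ =>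
        sum_one_div_mul_log_le_of_log_eq (fun p hp => hs p (mem_filter.mp hp).1)
          fun p hp => (mem_filter.mp hp).2
    _ = 4 / log 2 * ∑ k ∈ Ioo 0 M, ((k : ℝ) ^ 2)⁻¹ := by
        rw [mul_sum]; exact sum_congr rfl fun k _ => by ring
    _ ≤ 4 / log 2 * 2 := by
        gcongr; simpa using sum_Ioo_inv_sq_le (α := ℝ) 0 M
    _ ≤ 12 := by
        rw [div_mul_eq_mul_div, div_le_iff₀ (by linarith)]; linarith

noncomputable def rankinWeight (a β : ℝ) (q : ℕ) : ℝ := (q : ℝ) ^ (-β) * ∏ p ∈ q.primeFactors, a / p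

section RankinWeight

variable {a β : ℝ}

theorem rankinWeight_zero (hβ : β ≠ 0) : rankinWeight a β 0 = 0 := by
  simp [rankinWeight, zero_rpow (neg_ne_zero.mpr hβ)]

theorem rankinWeight_one : rankinWeight a β 1 = 1 := by
  simp [rankinWeight]

theorem rankinWeight_mul {m n : ℕ} (h : m.Coprime n) :
    rankinWeight a β (m * n) = rankinWeight a β m * rankinWeight a β n := by
  rw [rankinWeight, h.primeFactors_mul, prod_union h.disjoint_primeFactors, Nat.cast_mul,
    mul_rpow (Nat.cast_nonneg m) (Nat.cast_nonneg n), rankinWeight, rankinWeight]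
  ring

theorem rankinWeight_prime_pow_succ {p : ℕ} (hp : p.Prime) (n : ℕ) :
    rankinWeight a β (p ^ (n + 1)) = a / p * ((p : ℝ) ^ (-β)) ^ (n + 1) := by
  rw [rankinWeight, Nat.primeFactors_prime_pow n.succ_ne_zero hp, prod_singleton, Nat.cast_pow,
    ← rpow_natCast, ← rpow_natCast, ← rpow_mul (Nat.cast_nonneg p),
    ← rpow_mul (Nat.cast_nonneg p), mul_comm (n + 1 : ℕ).cast, mul_comm]

theorem rankinWeight_nonneg (ha : 0 ≤ a) (q : ℕ) : 0 ≤ rankinWeight a β q := by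
  unfold rankinWeight; positivity

theorem hasSum_rankinWeight_prime_pow (hβ : 0 < β) {p : ℕ} (hp : p.Prime) :
    HasSum (fun n => rankinWeight a β (p ^ n)) (1 + a / (p * ((p : ℝ) ^ β - 1))) := by
  have hp1 : (1 : ℝ) < p := by exact_mod_cast hp.one_lt
  set r := (p : ℝ) ^ (-β)
  have hr0 : 0 ≤ r := rpow_nonneg (Nat.cast_nonneg p) _
  have hr1 : r < 1 := rpow_lt_one_of_one_lt_of_neg hp1 (neg_lt_zero.mpr hβ)
  have hpβ : 1 < (p : ℝ) ^ β := one_lt_rpow hp1 hβ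
  have hrinv : r = ((p : ℝ) ^ β)⁻¹ := rpow_neg (Nat.cast_nonneg p) β
  have hterm : (fun n => rankinWeight a β (p ^ (n + 1))) = fun n => a / p * r * r ^ n :=
    funext fun n => by rw [rankinWeight_prime_pow_succ hp]; ring
  have hvalue : 1 + a / (p * ((p : ℝ) ^ β - 1)) - ∑ n ∈ range 1, rankinWeight a β (p ^ n)
      = a / p * r * (1 - r)⁻¹ := by
    rw [sum_range_one, pow_zero, rankinWeight_one, hrinv]
    have : (p : ℝ) ^ β - 1 ≠ 0 := by linarith
    have : (p : ℝ) ≠ 0 := by positivity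
    field_simp
    ring
  rw [← hasSum_nat_add_iff' 1, hterm, hvalue]
  exact (hasSum_geometric_of_lt_one hr0 hr1).mul_left _

theorem tsum_rankinWeight_prime_pow_le (ha : 0 ≤ a) (hβ : 0 < β) {p : ℕ} (hp : p.Prime) :
    ∑' n, rankinWeight a β (p ^ n) ≤ exp (a / (β * (p * log p))) := by
  have hp1 : (1 : ℝ) < p := by exact_mod_cast hp.one_lt
  have hlogp : 0 < log p := log_pos hp1
  have hpβ : β * log p ≤ (p : ℝ) ^ β - 1 := by
    rw [rpow_def_of_pos (by linarith), mul_comm (log p)]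
    linarith [add_one_le_exp (β * log p)]
  rw [(hasSum_rankinWeight_prime_pow hβ hp).tsum_eq]
  calc 1 + a / (p * ((p : ℝ) ^ β - 1)) ≤ 1 + a / (β * (p * log p)) := by
        gcongr 1 + a / ?_
        calc β * (p * log p) = p * (β * log p) := by ring
          _ ≤ p * ((p : ℝ) ^ β - 1) := by gcongr
    _ ≤ exp (a / (β * (p * log p))) := by linarith [add_one_le_exp (a / (β * (p * log p)))]

theorem sum_range_rankinWeight_le (ha : 0 ≤ a) (hβ : 0 < β) (N : ℕ) :
    ∑ q ∈ range N, rankinWeight a β q ≤ exp (12 * a / β) := by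
  obtain ⟨-, hsum⟩ := EulerProduct.summable_and_hasSum_smoothNumbers_prod_primesBelow_tsum
    rankinWeight_one (rankinWeight_mul (a := a) (β := β))
    (fun hp => (hasSum_rankinWeight_prime_pow hβ hp).summable.norm) N
  have hsum' :=
    (hasSum_subtype_iff_indicator (s := N.smoothNumbers) (f := rankinWeight a β)).mp hsum
  calc ∑ q ∈ range N, rankinWeight a β q
      = ∑ q ∈ range N, (N.smoothNumbers).indicator (rankinWeight a β) q := by
        refine sum_congr rfl fun q hq => ?_
        rcases Nat.eq_zero_or_pos q with rfl | hq0
        · rw [rankinWeight_zero hβ.ne',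
            Set.indicator_apply_eq_zero.mpr fun _ => rankinWeight_zero hβ.ne']
        · exact (Set.indicator_of_mem (Nat.mem_smoothNumbers_of_lt hq0 (mem_range.mp hq)) _).symm
    _ ≤ ∏ p ∈ N.primesBelow, ∑' n, rankinWeight a β (p ^ n) :=
        sum_le_hasSum _ (fun q _ => Set.indicator_nonneg (fun q _ => rankinWeight_nonneg ha q) q)
          hsum'
    _ ≤ ∏ p ∈ N.primesBelow, exp (a / (β * (p * log p))) :=
        prod_le_prod (fun p _ => tsum_nonneg fun n => rankinWeight_nonneg ha _)
          fun p hp => tsum_rankinWeight_prime_pow_le ha hβ (Nat.prime_of_mem_primesBelow hp)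
    _ = exp (a / β * ∑ p ∈ N.primesBelow, 1 / (p * log p)) := by
        rw [← exp_sum, mul_sum]
        exact congrArg exp (sum_congr rfl fun p _ => by ring)
    _ ≤ exp (12 * a / β) := by
        rw [exp_le_exp]
        calc a / β * ∑ p ∈ N.primesBelow, 1 / (p * log p) ≤ a / β * 12 := by
              gcongr
              exact sum_one_div_mul_log_le fun p hp => Nat.prime_of_mem_primesBelow hp
          _ = 12 * a / β := by ring

end RankinWeight

theorem fhat_eq_rpow_mul_rankinWeight (β : ℝ) {q : ℕ} (hq : 0 < q) :
    fhat q = (q : ℝ) ^ (β - 1) * rankinWeight 3 β q := by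
  rw [fhat, rankinWeight, ← mul_assoc, ← rpow_add (by exact_mod_cast hq),
    show β - 1 + -β = -1 by ring, rpow_neg_one, one_div]

theorem tsum_fhat_tail_le {Y β : ℝ} (hY : 0 < Y) (hβ0 : 0 < β) (hβ1 : β ≤ 1) :
    ∑' q : ℕ, (if Y ≤ (q : ℝ) then fhat q else 0) ≤ Y ^ (β - 1) * exp (36 / β) := by
  have tail_le (q : ℕ) :
      (if Y ≤ (q : ℝ) then fhat q else 0) ≤ Y ^ (β - 1) * rankinWeight 3 β q := by
    split_ifs with hq
    · rw [fhat_eq_rpow_mul_rankinWeight β (by exact_mod_cast hY.trans_le hq)]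
      exact mul_le_mul_of_nonneg_right (rpow_le_rpow_of_nonpos hY hq (by linarith))
        (rankinWeight_nonneg (by norm_num) q)
    · exact mul_nonneg (rpow_nonneg hY.le _) (rankinWeight_nonneg (by norm_num) q)
  refine Real.tsum_le_of_sum_range_le (fun q => ?_) fun N => ?_
  · split_ifs
    · unfold fhat; positivity
    · exact le_rfl
  calc ∑ q ∈ range N, (if Y ≤ (q : ℝ) then fhat q else 0)
      ≤ ∑ q ∈ range N, Y ^ (β - 1) * rankinWeight 3 β q := sum_le_sum fun q _ => tail_le q
    _ = Y ^ (β - 1) * ∑ q ∈ range N, rankinWeight 3 β q := (mul_sum ..).symm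
    _ ≤ Y ^ (β - 1) * exp (12 * 3 / β) := by
        gcongr
        exact sum_range_rankinWeight_le (by norm_num) hβ0 N
    _ = Y ^ (β - 1) * exp (36 / β) := by norm_num

theorem stmt11 :
    ∃ c > (0 : ℝ), ∃ C > (0 : ℝ), ∀ Y : ℝ, 2 ≤ Y →
      (∑' q : ℕ, if Y ≤ (q : ℝ) then fhat q else 0)
        ≤ C * Real.exp (c * Real.sqrt (Real.log Y)) / Y := by
  refine ⟨145 / 2, by norm_num, 1, one_pos, fun Y hY => ?_⟩
  have hY0 : 0 < Y := by linarith
  set s := √(log Y)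
  have hs : 1 / 2 ≤ s := by
    refine le_sqrt_of_sq_le ?_
    linarith [log_two_gt_d9, log_le_log two_pos hY]
  have hYs : Y = exp (s ^ 2) := by
    rw [sq_sqrt (log_nonneg (by linarith)), exp_log hY0]
  calc ∑' q : ℕ, (if Y ≤ (q : ℝ) then fhat q else 0)
      ≤ Y ^ (1 / (2 * s) - 1) * exp (36 / (1 / (2 * s))) :=
        tsum_fhat_tail_le hY0 (by positivity) ((div_le_one (by positivity)).mpr (by linarith))
    _ = 1 * exp (145 / 2 * s) / Y := by
        rw [hYs, ← exp_mul, one_mul, ← exp_add, ← exp_sub]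
        congr 1
        field_simp
        ring
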